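/- (Short time existence and uniqueness for the inviscid simplified Bardina model.) Let α > 0, v^in ∈ V' and f ∈ V'. Then there exists T* > 0, depending on ‖v^in‖_{V'}, such that the inviscid simplified Bardina model dv/dt + B(u,u) = f, v = u + α²Au, has a unique solution v ∈ C¹([−T*, T*]; V') with v(0) = v^in; equivalently u = (I + α²A)^{−1}v ∈ C¹([−T*, T*]; V). -/

import Mathlib

/-!
Abstract functional setting for the 3D viscous and inviscid simplified Bardina
turbulence models on the periodic box `Ω = [0,2πL]³` (Cao–Lunasin–Titi).

`H` is the closure in `L²(Ω)³` of the mean-zero, divergence-free, Ω-periodic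
trigonometric polynomials and `V` its closure in `H¹(Ω)³`; `incl : V ↪ H` is the
inclusion (so `‖incl w‖` is the L²-norm `|w|`, while the norm of `V` is
`‖w‖ = |∇w|`).  `A = -P_σ Δ` is the Stokes operator (modelled as an everywhere
defined linear map, which represents the actual Stokes operator on its domain
`DA = D(A) = H² ∩ V`), with smallest eigenvalue `λ₁ = L⁻²`, inverse `Ainv = A⁻¹`
and square root of the inverse `AinvSqrt = A^{-1/2}`.  `B w₁ w₂ = P_σ((w₁·∇)w₂)`
is the bilinear term, viewed as a continuous bilinear map `V × V → V'`, where the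
dual `V'` is modelled as `V →L[ℝ] ℝ` and `B w₁ w₂ w₃` is the duality pairing
`⟨B(w₁,w₂), w₃⟩_{V'}`.
-/

noncomputable section

structure BardinaSetting where
  /-- the size of the periodic box `Ω = [0,2πL]³` -/
  L : ℝ
  L_pos : 0 < L
  /-- the space `H` (divergence-free, mean-zero `L²`) -/
  H : Type
  [nH : NormedAddCommGroup H]
  [iH : InnerProductSpace ℝ H]
  [cH : CompleteSpace H]
  /-- the space `V` (divergence-free, mean-zero `H¹`), normed by `‖w‖ = |∇w|` -/
  V : Type
  [nV : NormedAddCommGroup V]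
  [iV : InnerProductSpace ℝ V]
  [cV : CompleteSpace V]
  /-- the inclusion `V ↪ H`; `‖incl w‖` is the `L²` norm `|w|` -/
  incl : V →L[ℝ] H
  incl_inj : Function.Injective incl
  /-- the domain `D(A) = H² ∩ V` of the Stokes operator -/
  DA : Submodule ℝ V
  /-- the Stokes operator `A = -P_σΔ` (an arbitrary linear extension beyond `DA`) -/
  A : V →ₗ[ℝ] H
  /-- `A⁻¹` -/
  Ainv : H →L[ℝ] H
  /-- `A^{-1/2}` -/
  AinvSqrt : H →L[ℝ] H
  /-- the bilinear map `B(w₁,w₂) = P_σ((w₁·∇)w₂) : V × V → V'`;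
  `B w₁ w₂ w₃ = ⟨B(w₁,w₂), w₃⟩_{V'}` -/
  B : V →L[ℝ] V →L[ℝ] V →L[ℝ] ℝ
  /-- the smallest eigenvalue `λ₁` of `A` -/
  lam1 : ℝ
  lam1_eq : lam1 = (L ^ 2)⁻¹
  /-- Poincaré inequality `|w|² ≤ λ₁⁻¹ ‖w‖²` -/
  poincare : ∀ w : V, ‖incl w‖ ^ 2 ≤ lam1⁻¹ * ‖w‖ ^ 2
  /-- `(A w₁, w₂)_{L²} = ((w₁, w₂))_V` for `w₁ ∈ D(A)` -/
  stokes_identity : ∀ w₁ ∈ DA, ∀ w₂ : V, (inner ℝ (A w₁) (incl w₂) : ℝ) = inner ℝ w₁ w₂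
  Ainv_spec : ∀ w ∈ DA, Ainv (A w) = incl w
  AinvSqrt_sq : ∀ h : H, AinvSqrt (AinvSqrt h) = Ainv h

open MeasureTheory Real Set

attribute [instance] BardinaSetting.nH BardinaSetting.iH BardinaSetting.cH
attribute [instance] BardinaSetting.nV BardinaSetting.iV BardinaSetting.cV

namespace BardinaSetting

variable (S : BardinaSetting)

/-- the `L²` norm `|w|` of `w ∈ V` -/
def normH (w : S.V) : ℝ := ‖S.incl w‖

/-- `K₁ := min{|A^{−1/2}f|²/ν, |A^{−1}f|²/(να²)}` -/
def K1 (ν α : ℝ) (f : S.H) : ℝ :=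
  min (‖S.AinvSqrt f‖ ^ 2 / ν) (‖S.Ainv f‖ ^ 2 / (ν * α ^ 2))

/-- `K₂ := min{|A^{−1/2}f|²/(να²), |f|²/ν}` -/
def K2 (ν α : ℝ) (f : S.H) : ℝ :=
  min (‖S.AinvSqrt f‖ ^ 2 / (ν * α ^ 2)) (‖f‖ ^ 2 / ν)

/-- `k₁ := |u^in|² + α²‖u^in‖² + K₁/(νλ₁)` -/
def k1 (ν α : ℝ) (f : S.H) (uin : S.V) : ℝ :=
  S.normH uin ^ 2 + α ^ 2 * ‖uin‖ ^ 2 + S.K1 ν α f / (ν * S.lam1)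

/-- the duality pairing `⟨v, w⟩_{V'}` where `v = u + α²Au`, namely
`(u,w)_{L²} + α²((u,w))_V` -/
def vPair (α : ℝ) (u w : S.V) : ℝ :=
  (inner ℝ (S.incl u) (S.incl w) : ℝ) + α ^ 2 * (inner ℝ u w : ℝ)

/-- `v = u + α²Au` as an element of `H` (meaningful when `u ∈ D(A)`) -/
def vH (α : ℝ) (u : S.V) : S.H := S.incl u + α ^ 2 • S.A u

/-- The map `u ↦ v = (I + α²A) u` from `V` to `V' = V →L[ℝ] ℝ`:
`⟨Jmap α u, w⟩ = (u,w)_{L²} + α²((u,w))_V`. -/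
def Jmap (α : ℝ) (u : S.V) : S.V →L[ℝ] ℝ :=
  (innerSL ℝ (S.incl u)).comp S.incl + α ^ 2 • innerSL ℝ u

/-- A weak solution on `[0,T]` of the viscous simplified Bardina model
`dv/dt + νAv + B(u,u) = f`, `v = u + α²Au`, with initial value `u(0) = u^in ∈ V`:
a function `u ∈ C([0,T];V) ∩ L²([0,T];D(A))` with `du/dt ∈ L²([0,T];H)` such that
for a.e. `t₀, t ∈ [0,T]` and every `w ∈ D(A)`,
`⟨v(t),w⟩ − ⟨v(t₀),w⟩ + ν∫_{t₀}^{t}(v(s),Aw)ds + ∫_{t₀}^{t}(B(u(s),u(s)),w)ds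
  = ∫_{t₀}^{t}(f,w)ds`. -/
structure IsWeakSolution (ν α T : ℝ) (f : S.H) (uin : S.V) (u : ℝ → S.V) : Prop where
  /-- initial value -/
  init : u 0 = uin
  /-- `u ∈ C([0,T];V)` -/
  cont : ContinuousOn u (Set.Icc 0 T)
  /-- `u(t) ∈ D(A)` for a.e. `t ∈ [0,T]` -/
  memDA : ∀ᵐ t ∂(volume.restrict (Set.Icc 0 T)), u t ∈ S.DA
  /-- `u ∈ L²([0,T];D(A))` -/
  sqIntA : IntegrableOn (fun t => ‖S.A (u t)‖ ^ 2) (Set.Icc 0 T)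
  /-- `du/dt ∈ L²([0,T];H)`: `u`, as an `H`-valued function, is the primitive of
  an `L²` function -/
  hasDeriv : ∃ u' : ℝ → S.H,
    IntegrableOn (fun t => ‖u' t‖ ^ 2) (Set.Icc 0 T) ∧
    ∀ t ∈ Set.Icc 0 T, S.incl (u t) = S.incl uin + ∫ s in (0:ℝ)..t, u' s
  /-- the weak formulation of the equation -/
  weak_form : ∀ w ∈ S.DA,
    ∀ᵐ t₀ ∂(volume.restrict (Set.Icc 0 T)),
      ∀ᵐ t ∂(volume.restrict (Set.Icc 0 T)),
        S.vPair α (u t) w - S.vPair α (u t₀) w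
            + ν * ∫ s in t₀..t, (inner ℝ (S.vH α (u s)) (S.A w) : ℝ)
            + ∫ s in t₀..t, S.B (u s) (u s) w
          = ∫ _s in t₀..t, (inner ℝ f (S.incl w) : ℝ)

/-- A solution on the time interval `I` of the inviscid simplified Bardina model
`dv/dt + B(u,u) = f`, `v = u + α²Au ∈ V'`, i.e. `u = (I + α²A)⁻¹ v`.
Since `u` is continuous, `dv/dt = f - B(u,u)` is continuous, so `v ∈ C¹(I;V')`. -/
def IsInviscidSolution (α : ℝ) (f : S.V →L[ℝ] ℝ) (I : Set ℝ) (u : ℝ → S.V) : Prop :=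
  ContinuousOn u I ∧
    ∀ t ∈ I, HasDerivWithinAt (fun s => S.Jmap α (u s)) (f - S.B (u t) (u t)) I t

end BardinaSetting

/-!
Since `α ≠ 0`, the form `(u, w) ↦ (u, w) + α²((u, w))` is coercive on `V`, so by Lax–Milgram
`J = I + α²A : V → V'` is an isomorphism of Banach spaces. In the variable `v = J u` the model
becomes the autonomous ODE `dv/dt = f − B(J⁻¹v, J⁻¹v)` in `V'`, whose right-hand side is a
continuous quadratic polynomial, hence `C¹`. Picard–Lindelöf gives a solution on some `[−T, T]`,
and any two solutions coincide by Gronwall, because a `C¹` field is Lipschitz on the compact set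
swept out by both trajectories.
-/

open Set Metric

section ODE

variable {E : Type*} [NormedAddCommGroup E] [NormedSpace ℝ E]

theorem ODE_solution_unique_of_mem_Icc_of_locallyLipschitz {F : E → E}
    (hF : LocallyLipschitz F) {f g : ℝ → E} {a b t₀ : ℝ} (ht₀ : t₀ ∈ Ioo a b)
    (hf : ∀ t ∈ Icc a b, HasDerivWithinAt f (F (f t)) (Icc a b) t)
    (hg : ∀ t ∈ Icc a b, HasDerivWithinAt g (F (g t)) (Icc a b) t)
    (heq : f t₀ = g t₀) : EqOn f g (Icc a b) := by
  have hfc : ContinuousOn f (Icc a b) := fun t ht => (hf t ht).continuousWithinAt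
  have hgc : ContinuousOn g (Icc a b) := fun t ht => (hg t ht).continuousWithinAt
  -- both trajectories stay in a compact set, on which `F` is Lipschitz
  set s := f '' Icc a b ∪ g '' Icc a b
  obtain ⟨K, hK⟩ := (hF.locallyLipschitzOn (s := s)).exists_lipschitzOnWith_of_compact
    ((isCompact_Icc.image_of_continuousOn hfc).union (isCompact_Icc.image_of_continuousOn hgc))
  have hderiv {h : ℝ → E} (hh : ∀ t ∈ Icc a b, HasDerivWithinAt h (F (h t)) (Icc a b) t)
      (t : ℝ) (ht : t ∈ Ioo a b) : HasDerivAt h (F (h t)) t :=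
    (hh t (Ioo_subset_Icc_self ht)).hasDerivAt (Icc_mem_nhds ht.1 ht.2)
  exact ODE_solution_unique_of_mem_Icc (s := fun _ => s) (fun _ _ => hK) ht₀ hfc (hderiv hf)
    (fun t ht => Or.inl (mem_image_of_mem f (Ioo_subset_Icc_self ht))) hgc (hderiv hg)
    (fun t ht => Or.inr (mem_image_of_mem g (Ioo_subset_Icc_self ht))) heq

variable [CompleteSpace E]

theorem ContDiff.exists_eq_forall_mem_Icc_hasDerivWithinAt {F : E → E} (hF : ContDiff ℝ 1 F)
    (x₀ : E) : ∃ T > 0, ∃ v : ℝ → E, v 0 = x₀ ∧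
      ∀ t ∈ Icc (-T) T, HasDerivWithinAt v (F (v t)) (Icc (-T) T) t := by
  obtain ⟨T, hT, a, r, L, K, hr, hPL⟩ :=
    IsPicardLindelof.of_contDiffAt_one hF.contDiffAt (x₀ := x₀)
  obtain ⟨v, hv0, hv⟩ :=
    (hPL 0).exists_eq_forall_mem_Icc_hasDerivWithinAt (mem_closedBall_self hr.le)
  refine ⟨T, hT, v, hv0, ?_⟩
  simpa only [zero_sub, zero_add] using hv

theorem ContDiff.exists_eq_forall_mem_Icc_hasDerivWithinAt_unique {F : E → E}
    (hF : ContDiff ℝ 1 F) (x₀ : E) : ∃ T > 0, ∃ v : ℝ → E,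
      (v 0 = x₀ ∧ ∀ t ∈ Icc (-T) T, HasDerivWithinAt v (F (v t)) (Icc (-T) T) t) ∧
      ∀ w : ℝ → E, w 0 = x₀ →
        (∀ t ∈ Icc (-T) T, HasDerivWithinAt w (F (w t)) (Icc (-T) T) t) →
        EqOn w v (Icc (-T) T) := by
  obtain ⟨T, hT, v, hv0, hv⟩ := hF.exists_eq_forall_mem_Icc_hasDerivWithinAt x₀
  exact ⟨T, hT, v, ⟨hv0, hv⟩, fun w hw0 hw =>
    ODE_solution_unique_of_mem_Icc_of_locallyLipschitz hF.locallyLipschitz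
      ⟨neg_lt_zero.2 hT, hT⟩ hw hv (hw0.trans hv0.symm)⟩

end ODE

theorem IsCoercive.bijective {V : Type*} [NormedAddCommGroup V] [InnerProductSpace ℝ V]
    [CompleteSpace V] {b : V →L[ℝ] V →L[ℝ] ℝ} (hb : IsCoercive b) :
    Function.Bijective b := by
  have : ⇑b = InnerProductSpace.toDual ℝ V ∘ hb.continuousLinearEquivOfBilin := by
    ext u w
    simp [InnerProductSpace.toDual_apply_apply, hb.continuousLinearEquivOfBilin_apply]
  rw [this]
  exact (InnerProductSpace.toDual ℝ V).bijective.comp hb.continuousLinearEquivOfBilin.bijective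

namespace BardinaSetting

variable (S : BardinaSetting) {α : ℝ}

def jmapBilin (α : ℝ) : S.V →L[ℝ] S.V →L[ℝ] ℝ :=
  (innerSL ℝ).bilinearComp S.incl S.incl + α ^ 2 • innerSL ℝ

theorem jmapBilin_apply (α : ℝ) (u : S.V) : S.jmapBilin α u = S.Jmap α u :=
  rfl

theorem jmap_apply_self (α : ℝ) (u : S.V) :
    S.Jmap α u u = ‖S.incl u‖ ^ 2 + α ^ 2 * ‖u‖ ^ 2 := by
  simp only [Jmap, add_apply, ContinuousLinearMap.comp_apply, smul_apply, innerSL_apply_apply,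
    real_inner_self_eq_norm_sq, smul_eq_mul]

theorem isCoercive_jmapBilin (hα : α ≠ 0) : IsCoercive (S.jmapBilin α) := by
  refine ⟨α ^ 2, by positivity, fun u => ?_⟩
  rw [jmapBilin_apply]
  nlinarith [S.jmap_apply_self α u, sq_nonneg ‖S.incl u‖]

def jmapEquiv (hα : α ≠ 0) : S.V ≃L[ℝ] (S.V →L[ℝ] ℝ) :=
  ContinuousLinearEquiv.ofBijective (S.jmapBilin α)
    (LinearMap.ker_eq_bot.2 (S.isCoercive_jmapBilin hα).bijective.1)
    (LinearMap.range_eq_top.2 (S.isCoercive_jmapBilin hα).bijective.2)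

theorem jmapEquiv_apply (hα : α ≠ 0) (u : S.V) : S.jmapEquiv hα u = S.Jmap α u :=
  S.jmapBilin_apply α u

def inviscidField (hα : α ≠ 0) (f v : S.V →L[ℝ] ℝ) : S.V →L[ℝ] ℝ :=
  f - S.B ((S.jmapEquiv hα).symm v) ((S.jmapEquiv hα).symm v)

theorem contDiff_inviscidField (hα : α ≠ 0) (f : S.V →L[ℝ] ℝ) :
    ContDiff ℝ 1 (S.inviscidField hα f) :=
  contDiff_const.sub <| (S.B.contDiff.comp (S.jmapEquiv hα).symm.contDiff).clm_apply
    (S.jmapEquiv hα).symm.contDiff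

theorem isInviscidSolution_iff (hα : α ≠ 0) {f : S.V →L[ℝ] ℝ} {I : Set ℝ}
    {u : ℝ → S.V} :
    S.IsInviscidSolution α f I u ↔ ∀ t ∈ I, HasDerivWithinAt (fun s => S.jmapEquiv hα (u s))
      (S.inviscidField hα f (S.jmapEquiv hα (u t))) I t := by
  simp only [inviscidField, ContinuousLinearEquiv.symm_apply_apply]
  refine ⟨fun hu => by simpa only [jmapEquiv_apply] using hu.2, fun hu => ⟨?_, ?_⟩⟩
  · have hJu : ContinuousOn (fun s => S.jmapEquiv hα (u s)) I :=
      fun t ht => (hu t ht).continuousWithinAt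
    simpa [Function.comp_def] using (S.jmapEquiv hα).symm.continuous.comp_continuousOn hJu
  · simpa only [jmapEquiv_apply] using hu

end BardinaSetting

/-- short time existence and uniqueness for the inviscid simplified
Bardina model.  For `α > 0`, `v^in ∈ V'` and `f ∈ V'` there is `T* > 0` (depending
on `‖v^in‖_{V'}`) such that `dv/dt + B(u,u) = f`, `v = u + α²Au`, has a unique
solution `v ∈ C¹([−T*,T*];V')`, `v(0) = v^in` (equivalently
`u = (I + α²A)^{−1}v ∈ C¹([−T*,T*];V)`). -/
theorem inviscid_short_time_existence_uniqueness (S : BardinaSetting) (α : ℝ)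
    (hα : 0 < α) (f vin : S.V →L[ℝ] ℝ) :
    ∃ Tstar : ℝ, 0 < Tstar ∧ ∃ u : ℝ → S.V,
      S.IsInviscidSolution α f (Set.Icc (-Tstar) Tstar) u ∧
      S.Jmap α (u 0) = vin ∧
      ∀ u₂ : ℝ → S.V, S.IsInviscidSolution α f (Set.Icc (-Tstar) Tstar) u₂ →
        S.Jmap α (u₂ 0) = vin → ∀ t ∈ Set.Icc (-Tstar) Tstar, u₂ t = u t := by
  obtain ⟨T, hT, v, ⟨hv0, hv⟩, hv_unique⟩ :=
    (S.contDiff_inviscidField hα.ne' f).exists_eq_forall_mem_Icc_hasDerivWithinAt_unique vin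
  refine ⟨T, hT, fun t => (S.jmapEquiv hα.ne').symm (v t), ?_, ?_, ?_⟩
  · rw [S.isInviscidSolution_iff hα.ne']
    simpa only [ContinuousLinearEquiv.apply_symm_apply] using hv
  · rw [← S.jmapEquiv_apply hα.ne']
    exact (ContinuousLinearEquiv.apply_symm_apply _ _).trans hv0
  · intro u₂ hu₂ hu₂0 t ht
    rw [S.isInviscidSolution_iff hα.ne'] at hu₂
    rw [← S.jmapEquiv_apply hα.ne'] at hu₂0
    exact (S.jmapEquiv hα.ne').eq_symm_apply.2 (hv_unique _ hu₂0 hu₂ ht)
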